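/- The proof system KT⊡ = K⊡ + the axiom φ → (⊡φ → (⊡(φ → ψ) → ⊡ψ)) is sound and strongly complete with respect to the class of reflexive bimodal frames, and also with respect to the class of bimodal frames ⟨S, R1, R2⟩ in which R1 is reflexive or R2 is reflexive: Γ ⊢_{KT⊡} φ if and only if every pointed model based on a frame in the class satisfying all of Γ also satisfies φ. -/

import Mathlib

/-- Formulas of the language L(⊡): propositional variables, ¬, ∧, and ⊡ (`box`). -/
inductive Form : Type
  | var : ℕ → Form
  | neg : Form → Form
  | conj : Form → Form → Form
  | box : Form → Form

namespace Form
/-- Implication, defined as usual. -/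
def imp (φ ψ : Form) : Form := neg (conj φ (neg ψ))
/-- Disjunction, defined as usual. -/
def disj (φ ψ : Form) : Form := neg (conj (neg φ) (neg ψ))
/-- Biconditional, defined as usual. -/
def biff (φ ψ : Form) : Form := conj (imp φ ψ) (imp ψ φ)
/-- The constant ⊤. -/
def top : Form := imp (var 0) (var 0)
end Form

/-- A bimodal model: a nonempty set of worlds, two accessibility relations and a valuation. -/
structure BiModel : Type 1 where
  S : Type
  ne : Nonempty S
  R1 : S → S → Prop
  R2 : S → S → Prop
  V : ℕ → Set S

/-- Truth of a formula at a world: ⊡φ holds at s iff all R1-successors and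
R2-successors of s agree on the truth value of φ. -/
def sat (M : BiModel) : M.S → Form → Prop
  | s, .var n => s ∈ M.V n
  | s, .neg φ => ¬ sat M s φ
  | s, .conj φ ψ => sat M s φ ∧ sat M s ψ
  | s, .box φ => ∀ t u, M.R1 s t → M.R2 s u → (sat M t φ ↔ sat M u φ)

/-- Boolean evaluation treating boxed formulas as atoms (for defining tautologies). -/
def beval (v : Form → Bool) : Form → Bool
  | .var n => v (.var n)
  | .neg φ => !beval v φ
  | .conj φ ψ => beval v φ && beval v ψ
  | .box φ => v (.box φ)

/-- φ is an instance of a propositional tautology. -/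
def Form.isTaut (φ : Form) : Prop := ∀ v : Form → Bool, beval v φ = true

/-- Theorems of the system K⊡ extended with the extra axioms in `Ext`:
propositional tautologies, ⊡⊤, ⊡EQU, ⊡CON, ⊡DIS, extra axioms,
closed under modus ponens and RE⊡. -/
inductive KThm (Ext : Form → Prop) : Form → Prop
  | taut {φ : Form} : φ.isTaut → KThm Ext φ
  | boxTop : KThm Ext (Form.box Form.top)
  | equ (φ : Form) : KThm Ext ((Form.box φ).biff (Form.box (Form.neg φ)))
  | con (φ ψ : Form) :
      KThm Ext (((Form.box φ).conj (Form.box ψ)).imp (Form.box (φ.conj ψ)))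
  | dis (φ ψ χ : Form) :
      KThm Ext ((Form.box φ).imp
        ((Form.box (φ.disj ψ)).disj (Form.box ((Form.neg φ).disj χ))))
  | ext {φ : Form} : Ext φ → KThm Ext φ
  | mp {φ ψ : Form} : KThm Ext (φ.imp ψ) → KThm Ext φ → KThm Ext ψ
  | re {φ ψ : Form} : KThm Ext (φ.biff ψ) → KThm Ext ((Form.box φ).biff (Form.box ψ))

/-- Γ ⊢ φ: φ is derivable from theorems of the system together with premises
in Γ using modus ponens. -/
inductive Deriv (Ext : Form → Prop) (Γ : Set Form) : Form → Prop
  | thm {φ : Form} : KThm Ext φ → Deriv Ext Γ φ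
  | prem {φ : Form} : φ ∈ Γ → Deriv Ext Γ φ
  | mp {φ ψ : Form} : Deriv Ext Γ (φ.imp ψ) → Deriv Ext Γ φ → Deriv Ext Γ ψ

/-- No extra axioms: the minimal system K⊡. -/
def NoExt : Form → Prop := fun _ => False

/-- Instances of the axiom ⊡T: φ → (⊡φ → (⊡(φ → ψ) → ⊡ψ)). -/
def TAx : Form → Prop := fun θ =>
  ∃ φ ψ : Form,
    θ = φ.imp ((Form.box φ).imp ((Form.box (φ.imp ψ)).imp (Form.box ψ)))

/-!
Soundness: if, say, `R1` is reflexive, then `s` is its own `R1`-successor, so `⊡φ` and `φ` at `s`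
make `φ` true at every `R2`-successor `u`, and then at every `R1`-successor `t`, since `t` and `u`
agree on `φ`; now `⊡(φ → ψ)` forces `t` and `u` to agree on `ψ`. The other axioms of K⊡ are valid
on all frames.

Completeness: `□φ := φ ∧ ⊡φ` is a normal box over KT⊡, whose K axiom is a tautological
consequence of the ⊡T axiom. In the canonical model both relations are the canonical relation
of `□`, which is reflexive. The truth lemma for `⊡φ` holds because, by ⊡EQU, `⊡φ` in a maximal
consistent set `Γ` puts `□φ` or `□¬φ` in `Γ`, while if `⊡φ ∉ Γ` both `{ψ | □ψ ∈ Γ} ∪ {φ}` and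
`{ψ | □ψ ∈ Γ} ∪ {¬φ}` are consistent.
-/

open Form

def Form.bot : Form := neg top

def Form.nec (φ : Form) : Form := conj φ (box φ)

section Semantics

variable {M : BiModel} {s : M.S} {φ ψ : Form}

@[simp] theorem sat_imp : sat M s (φ.imp ψ) ↔ (sat M s φ → sat M s ψ) := by
  simp only [imp, sat]; tauto

@[simp] theorem sat_disj : sat M s (φ.disj ψ) ↔ (sat M s φ ∨ sat M s ψ) := by
  simp only [disj, sat]; tauto

@[simp] theorem sat_biff : sat M s (φ.biff ψ) ↔ (sat M s φ ↔ sat M s ψ) := by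
  simp only [biff, sat, sat_imp]; tauto

@[simp] theorem sat_top : sat M s top := sat_imp.mpr id

theorem sat_of_isTaut (h : φ.isTaut) : sat M s φ := by
  classical
  have beval_sat : ∀ χ, beval (fun ψ => decide (sat M s ψ)) χ = true ↔ sat M s χ := by
    intro χ
    induction χ with
    | var n => simp [beval]
    | neg χ ih => simp [beval, sat, ← ih]
    | conj χ₁ χ₂ ih₁ ih₂ => simp [beval, sat, ih₁, ih₂]
    | box χ => simp [beval]
  exact (beval_sat φ).mp (h _)

end Semantics

section Soundness

variable {M : BiModel}

theorem sat_box_equ (s : M.S) (φ : Form) : sat M s ((box φ).biff (box (neg φ))) := by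
  simp only [sat_biff, sat, not_iff_not]

theorem sat_box_con (s : M.S) (φ ψ : Form) :
    sat M s (((box φ).conj (box ψ)).imp (box (φ.conj ψ))) := by
  simp only [sat_imp, sat]
  intro ⟨hφ, hψ⟩ t u ht hu
  rw [hφ t u ht hu, hψ t u ht hu]

theorem sat_box_dis (s : M.S) (φ ψ χ : Form) :
    sat M s ((box φ).imp ((box (φ.disj ψ)).disj (box ((neg φ).disj χ)))) := by
  simp only [sat_imp, sat_disj, sat]
  intro hφ
  by_cases hsucc : ∃ t₀ u₀, M.R1 s t₀ ∧ M.R2 s u₀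
  · obtain ⟨t₀, u₀, ht₀, hu₀⟩ := hsucc
    have hR1 : ∀ t, M.R1 s t → (sat M t φ ↔ sat M u₀ φ) := fun t ht => hφ t u₀ ht hu₀
    have hR2 : ∀ u, M.R2 s u → (sat M u φ ↔ sat M u₀ φ) := fun u hu =>
      (hφ t₀ u ht₀ hu).symm.trans (hφ t₀ u₀ ht₀ hu₀)
    by_cases h₀ : sat M u₀ φ
    · left
      intro t u ht hu
      simp [hR1 t ht, hR2 u hu, h₀]
    · right
      intro t u ht hu
      simp [hR1 t ht, hR2 u hu, h₀]
  · left
    exact fun t u ht hu => (hsucc ⟨t, u, ht, hu⟩).elim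

theorem sat_of_tAx (hM : Reflexive M.R1 ∨ Reflexive M.R2) {θ : Form} (hθ : TAx θ)
    (s : M.S) : sat M s θ := by
  obtain ⟨φ, ψ, rfl⟩ := hθ
  simp only [sat_imp, sat]
  intro hφs hφ hφψ t u ht hu
  have hφtu : sat M t φ ∧ sat M u φ := by
    rcases hM with hR | hR
    · have hφu := (hφ s u (hR s) hu).mp hφs
      exact ⟨(hφ t u ht hu).mpr hφu, hφu⟩
    · have hφt := (hφ t s ht (hR s)).mpr hφs
      exact ⟨hφt, (hφ t u ht hu).mp hφt⟩
  have := hφψ t u ht hu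
  tauto

theorem KThm.sound {Ext : Form → Prop} (hExt : ∀ θ, Ext θ → ∀ s : M.S, sat M s θ)
    {φ : Form} (h : KThm Ext φ) (s : M.S) : sat M s φ := by
  induction h generalizing s with
  | taut h => exact sat_of_isTaut h
  | boxTop => exact fun _ _ _ _ => iff_of_true sat_top sat_top
  | equ φ => exact sat_box_equ s φ
  | con φ ψ => exact sat_box_con s φ ψ
  | dis φ ψ χ => exact sat_box_dis s φ ψ χ
  | ext h => exact hExt _ h s
  | mp _ _ ih₁ ih₂ => exact sat_imp.mp (ih₁ s) (ih₂ s)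
  | re _ ih =>
    simp only [sat_biff] at ih ⊢
    simp only [sat, ih]

theorem Deriv.sound {Ext : Form → Prop} (hExt : ∀ θ, Ext θ → ∀ s : M.S, sat M s θ)
    {Γ : Set Form} {φ : Form} (h : Deriv Ext Γ φ) {s : M.S} (hΓ : ∀ γ ∈ Γ, sat M s γ) :
    sat M s φ := by
  induction h with
  | thm h => exact h.sound hExt s
  | prem h => exact hΓ _ h
  | mp _ _ ih₁ ih₂ => exact sat_imp.mp ih₁ ih₂

theorem Deriv.sound_of_reflexive (hM : Reflexive M.R1 ∨ Reflexive M.R2)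
    {Γ : Set Form} {φ : Form} (h : Deriv TAx Γ φ) {s : M.S} (hΓ : ∀ γ ∈ Γ, sat M s γ) :
    sat M s φ :=
  h.sound (fun _ hθ => sat_of_tAx hM hθ) hΓ

end Soundness

section Tautologies

variable {v : Form → Bool} {φ ψ χ : Form}

@[simp] theorem beval_neg : beval v (neg φ) = true ↔ ¬ beval v φ = true := by
  simp [beval]

@[simp] theorem beval_conj :
    beval v (conj φ ψ) = true ↔ beval v φ = true ∧ beval v ψ = true := by
  simp [beval]

theorem Form.isTaut_imp_self : (φ.imp φ).isTaut := fun v => by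
  simp only [imp, beval_neg, beval_conj]; tauto

theorem Form.isTaut_imp_imp_self : (φ.imp (ψ.imp φ)).isTaut := fun v => by
  simp only [imp, beval_neg, beval_conj]; tauto

theorem Form.isTaut_imp_distrib :
    ((φ.imp (ψ.imp χ)).imp ((φ.imp ψ).imp (φ.imp χ))).isTaut := fun v => by
  simp only [imp, beval_neg, beval_conj]; tauto

theorem Form.isTaut_neg_intro : ((φ.imp bot).imp φ.neg).isTaut := fun v => by
  simp only [imp, bot, top, beval_neg, beval_conj]; tauto

theorem Form.isTaut_by_contra : ((φ.neg.imp bot).imp φ).isTaut := fun v => by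
  simp only [imp, bot, top, beval_neg, beval_conj]; tauto

theorem Form.isTaut_absurd : (φ.imp (φ.neg.imp bot)).isTaut := fun v => by
  simp only [imp, bot, top, beval_neg, beval_conj]; tauto

theorem Form.isTaut_conj_left : ((φ.conj ψ).imp φ).isTaut := fun v => by
  simp only [imp, beval_neg, beval_conj]; tauto

theorem Form.isTaut_conj_right : ((φ.conj ψ).imp ψ).isTaut := fun v => by
  simp only [imp, beval_neg, beval_conj]; tauto

theorem Form.isTaut_conj_intro : (φ.imp (ψ.imp (φ.conj ψ))).isTaut := fun v => by
  simp only [imp, beval_neg, beval_conj]; tauto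

theorem Form.isTaut_biff_top : (φ.imp (φ.biff top)).isTaut := fun v => by
  simp only [imp, biff, top, beval_neg, beval_conj]; tauto

theorem Form.isTaut_biff_mpr : ((φ.biff ψ).imp (ψ.imp φ)).isTaut := fun v => by
  simp only [imp, biff, beval_neg, beval_conj]; tauto

theorem Form.isTaut_tAx_imp_nec_k :
    ((φ.imp ((box φ).imp ((box (φ.imp ψ)).imp (box ψ)))).imp
      ((nec (φ.imp ψ)).imp ((nec φ).imp (nec ψ)))).isTaut := fun v => by
  simp only [imp, nec, beval_neg, beval_conj]; tauto

end Tautologies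

section Derivations

variable {Ext : Form → Prop} {Γ Γ' : Set Form} {φ ψ : Form}

theorem KThm.box_of (h : KThm Ext φ) : KThm Ext (box φ) :=
  .mp (.mp (.taut isTaut_biff_mpr) (.re (.mp (.taut isTaut_biff_top) h))) .boxTop

theorem KThm.nec_of (h : KThm Ext φ) : KThm Ext (nec φ) :=
  .mp (.mp (.taut isTaut_conj_intro) h) h.box_of

theorem Deriv.mono (h : Deriv Ext Γ φ) (hΓ : Γ ⊆ Γ') : Deriv Ext Γ' φ := by
  induction h with
  | thm h => exact .thm h
  | prem h => exact .prem (hΓ h)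
  | mp _ _ ih₁ ih₂ => exact .mp ih₁ ih₂

theorem Deriv.deduction (h : Deriv Ext (insert φ Γ) ψ) : Deriv Ext Γ (φ.imp ψ) := by
  induction h with
  | thm h => exact .mp (.thm (.taut isTaut_imp_imp_self)) (.thm h)
  | prem h =>
    rcases Set.mem_insert_iff.mp h with rfl | h
    · exact .thm (.taut isTaut_imp_self)
    · exact .mp (.thm (.taut isTaut_imp_imp_self)) (.prem h)
  | mp _ _ ih₁ ih₂ => exact .mp (.mp (.thm (.taut isTaut_imp_distrib)) ih₁) ih₂

theorem Deriv.neg_of_insert (h : Deriv Ext (insert φ Γ) bot) : Deriv Ext Γ φ.neg :=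
  .mp (.thm (.taut isTaut_neg_intro)) h.deduction

theorem Deriv.of_insert_neg (h : Deriv Ext (insert φ.neg Γ) bot) : Deriv Ext Γ φ :=
  .mp (.thm (.taut isTaut_by_contra)) h.deduction

theorem Deriv.absurd (h : Deriv Ext Γ φ) (hn : Deriv Ext Γ φ.neg) : Deriv Ext Γ bot :=
  .mp (.mp (.thm (.taut isTaut_absurd)) h) hn

theorem Deriv.exists_mem_of_sUnion {c : Set (Set Form)} (hc : DirectedOn (· ⊆ ·) c)
    (hne : c.Nonempty) (h : Deriv Ext (⋃₀ c) φ) : ∃ Δ ∈ c, Deriv Ext Δ φ := by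
  induction h with
  | thm h => exact ⟨hne.some, hne.some_mem, .thm h⟩
  | prem h =>
    obtain ⟨Δ, hΔ, hφ⟩ := Set.mem_sUnion.mp h
    exact ⟨Δ, hΔ, .prem hφ⟩
  | mp _ _ ih₁ ih₂ =>
    obtain ⟨Δ₁, hΔ₁, h₁⟩ := ih₁
    obtain ⟨Δ₂, hΔ₂, h₂⟩ := ih₂
    obtain ⟨Δ, hΔ, hΔ₁Δ, hΔ₂Δ⟩ := hc Δ₁ hΔ₁ Δ₂ hΔ₂
    exact ⟨Δ, hΔ, .mp (h₁.mono hΔ₁Δ) (h₂.mono hΔ₂Δ)⟩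

end Derivations

section MaxConsistent

def IsConsistent (Ext : Form → Prop) (Γ : Set Form) : Prop := ¬ Deriv Ext Γ bot

structure IsMaxConsistent (Ext : Form → Prop) (Γ : Set Form) : Prop where
  consistent : IsConsistent Ext Γ
  mem_or_neg_mem : ∀ φ, φ ∈ Γ ∨ neg φ ∈ Γ

variable {Ext : Form → Prop}

theorem exists_isMaxConsistent_superset {Γ : Set Form} (h : IsConsistent Ext Γ) :
    ∃ Δ, Γ ⊆ Δ ∧ IsMaxConsistent Ext Δ := by
  obtain ⟨Δ, hΓΔ, hmax⟩ := zorn_subset_nonempty {Δ | IsConsistent Ext Δ}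
    (fun c hc hchain hne => ⟨⋃₀ c, fun hbot => by
      obtain ⟨Δ, hΔ, hd⟩ := hbot.exists_mem_of_sUnion hchain.directedOn hne
      exact hc hΔ hd, fun _ => Set.subset_sUnion_of_mem⟩) Γ h
  have hins : ∀ φ, φ ∉ Δ → Deriv Ext (insert φ Δ) bot := fun φ hφ =>
    not_not.mp fun hcon => hφ (hmax.mem_of_prop_insert hcon)
  refine ⟨Δ, hΓΔ, hmax.prop, fun φ => or_iff_not_imp_left.mpr fun hφ => ?_⟩
  by_contra hnφ
  exact hmax.prop ((hins _ hnφ).of_insert_neg.absurd (hins φ hφ).neg_of_insert)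

namespace IsMaxConsistent

variable {Γ : Set Form} (hΓ : IsMaxConsistent Ext Γ) {φ ψ : Form}
include hΓ

theorem mem_of_deriv (h : Deriv Ext Γ φ) : φ ∈ Γ :=
  (hΓ.mem_or_neg_mem φ).resolve_right fun hn => hΓ.consistent (h.absurd (.prem hn))

theorem neg_mem_iff : neg φ ∈ Γ ↔ φ ∉ Γ :=
  ⟨fun hn h => hΓ.consistent ((Deriv.prem h).absurd (.prem hn)),
    (hΓ.mem_or_neg_mem φ).resolve_left⟩

theorem conj_mem_iff : conj φ ψ ∈ Γ ↔ φ ∈ Γ ∧ ψ ∈ Γ :=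
  ⟨fun h => ⟨hΓ.mem_of_deriv (.mp (.thm (.taut isTaut_conj_left)) (.prem h)),
      hΓ.mem_of_deriv (.mp (.thm (.taut isTaut_conj_right)) (.prem h))⟩,
    fun ⟨hφ, hψ⟩ => hΓ.mem_of_deriv (.mp (.mp (.thm (.taut isTaut_conj_intro)) (.prem hφ))
      (.prem hψ))⟩

theorem biff_mem_iff : φ.biff ψ ∈ Γ ↔ (φ ∈ Γ ↔ ψ ∈ Γ) := by
  simp only [biff, imp, hΓ.conj_mem_iff, hΓ.neg_mem_iff]
  tauto

theorem box_neg_mem_iff : box (neg φ) ∈ Γ ↔ box φ ∈ Γ :=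
  ((hΓ.biff_mem_iff).mp (hΓ.mem_of_deriv (.thm (.equ φ)))).symm

end IsMaxConsistent

end MaxConsistent

section Canonical

theorem KThm.nec_k (φ ψ : Form) : KThm TAx ((nec (φ.imp ψ)).imp ((nec φ).imp (nec ψ))) :=
  .mp (.taut isTaut_tAx_imp_nec_k) (.ext ⟨φ, ψ, rfl⟩)

theorem Deriv.nec_image {Γ : Set Form} {φ : Form} (h : Deriv TAx Γ φ) :
    Deriv TAx (nec '' Γ) (nec φ) := by
  induction h with
  | thm h => exact .thm h.nec_of
  | prem h => exact .prem ⟨_, h, rfl⟩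
  | mp _ _ ih₁ ih₂ => exact .mp (.mp (.thm (.nec_k _ _)) ih₁) ih₂

theorem isConsistent_empty : IsConsistent TAx ∅ := fun h =>
  Deriv.sound_of_reflexive (M := ⟨Unit, ⟨()⟩, fun _ _ => True, fun _ _ => True, fun _ => ∅⟩)
    (.inl fun _ => trivial) h (s := ()) (by simp) sat_top

def canonicalRel (Γ Δ : Set Form) : Prop := ∀ φ, nec φ ∈ Γ → φ ∈ Δ

def canonicalModel : BiModel where
  S := {Γ : Set Form // IsMaxConsistent TAx Γ}
  ne := let ⟨Δ, _, hΔ⟩ := exists_isMaxConsistent_superset isConsistent_empty; ⟨⟨Δ, hΔ⟩⟩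
  R1 Γ Δ := canonicalRel Γ.1 Δ.1
  R2 Γ Δ := canonicalRel Γ.1 Δ.1
  V n := {Γ | var n ∈ Γ.1}

theorem canonicalRel_refl : Reflexive canonicalModel.R1 :=
  fun Γ _ h => (Γ.2.conj_mem_iff.mp h).1

namespace IsMaxConsistent

variable {Γ : Set Form} (hΓ : IsMaxConsistent TAx Γ) {φ : Form}
include hΓ

theorem exists_canonicalRel_of_box_not_mem (h : box φ ∉ Γ) :
    ∃ Δ, IsMaxConsistent TAx Δ ∧ canonicalRel Γ Δ ∧ φ ∈ Δ := by
  have hcon : IsConsistent TAx (insert φ {ψ | nec ψ ∈ Γ}) := fun hbot => by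
    have hnec : Deriv TAx Γ (nec (neg φ)) :=
      hbot.neg_of_insert.nec_image.mono (by rintro _ ⟨ψ, hψ, rfl⟩; exact hψ)
    exact h (hΓ.box_neg_mem_iff.mp (hΓ.conj_mem_iff.mp (hΓ.mem_of_deriv hnec)).2)
  obtain ⟨Δ, hsub, hΔ⟩ := exists_isMaxConsistent_superset hcon
  exact ⟨Δ, hΔ, fun ψ hψ => hsub (Set.mem_insert_of_mem _ hψ), hsub (Set.mem_insert _ _)⟩

theorem nec_mem_or_nec_neg_mem (h : box φ ∈ Γ) : nec φ ∈ Γ ∨ nec (neg φ) ∈ Γ := by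
  simp only [nec, hΓ.conj_mem_iff, hΓ.box_neg_mem_iff]
  exact (hΓ.mem_or_neg_mem φ).imp (⟨·, h⟩) (⟨·, h⟩)

end IsMaxConsistent

theorem sat_canonicalModel_iff (φ : Form) (Γ : canonicalModel.S) :
    sat canonicalModel Γ φ ↔ φ ∈ Γ.1 := by
  induction φ generalizing Γ with
  | var n => rfl
  | neg φ ih => simp only [sat, ih, Γ.2.neg_mem_iff]
  | conj φ ψ ih₁ ih₂ => simp only [sat, ih₁, ih₂, Γ.2.conj_mem_iff]
  | box φ ih =>
    simp only [sat, ih]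
    constructor
    · intro hsat
      by_contra hφ
      obtain ⟨Δ₁, hΔ₁, hΓΔ₁, hφΔ₁⟩ := Γ.2.exists_canonicalRel_of_box_not_mem hφ
      obtain ⟨Δ₂, hΔ₂, hΓΔ₂, hφΔ₂⟩ :=
        Γ.2.exists_canonicalRel_of_box_not_mem (mt Γ.2.box_neg_mem_iff.mp hφ)
      exact hΔ₂.neg_mem_iff.mp hφΔ₂ ((hsat ⟨Δ₁, hΔ₁⟩ ⟨Δ₂, hΔ₂⟩ hΓΔ₁ hΓΔ₂).mp hφΔ₁)
    · intro hφ t u ht hu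
      rcases Γ.2.nec_mem_or_nec_neg_mem hφ with h | h
      · exact iff_of_true (ht φ h) (hu φ h)
      · exact iff_of_false (t.2.neg_mem_iff.mp (ht _ h)) (u.2.neg_mem_iff.mp (hu _ h))

theorem Deriv.of_forall_sat {Γ : Set Form} {φ : Form}
    (h : ∀ M : BiModel, (Reflexive M.R1 ∧ Reflexive M.R2) → ∀ s : M.S,
      (∀ γ ∈ Γ, sat M s γ) → sat M s φ) : Deriv TAx Γ φ := by
  by_contra hφ
  obtain ⟨Δ, hsub, hΔ⟩ :=
    exists_isMaxConsistent_superset (Ext := TAx) (Γ := insert φ.neg Γ) (mt Deriv.of_insert_neg hφ)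
  have hsatΓ : ∀ γ ∈ Γ, sat canonicalModel ⟨Δ, hΔ⟩ γ := fun γ hγ =>
    (sat_canonicalModel_iff γ _).mpr (hsub (Set.mem_insert_of_mem _ hγ))
  have hφΔ := (sat_canonicalModel_iff φ _).mp
    (h canonicalModel ⟨canonicalRel_refl, canonicalRel_refl⟩ _ hsatΓ)
  exact hΔ.neg_mem_iff.mp (hsub (Set.mem_insert _ _)) hφΔ

end Canonical

/-- KT⊡ = K⊡ + ⊡T is sound and strongly complete with respect to the class of
reflexive bimodal frames, and also with respect to the class of bimodal frames
in which R1 or R2 is reflexive. -/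
theorem stmt15 (Γ : Set Form) (φ : Form) :
    (Deriv TAx Γ φ ↔
      ∀ (M : BiModel), (Reflexive M.R1 ∧ Reflexive M.R2) →
        ∀ s : M.S, (∀ γ ∈ Γ, sat M s γ) → sat M s φ) ∧
    (Deriv TAx Γ φ ↔
      ∀ (M : BiModel), (Reflexive M.R1 ∨ Reflexive M.R2) →
        ∀ s : M.S, (∀ γ ∈ Γ, sat M s γ) → sat M s φ) :=
  ⟨⟨fun h _ hM _ hΓ => h.sound_of_reflexive (.inl hM.1) hΓ, Deriv.of_forall_sat⟩,
    ⟨fun h _ hM _ hΓ => h.sound_of_reflexive hM hΓ,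
      fun h => Deriv.of_forall_sat fun M hM => h M (.inl hM.1)⟩⟩
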